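/- Let s be a nonempty score sequence of length n and let 1 ≤ j ≤ n-1. Define s+j as the nondecreasing rearrangement of the entries s_i + j reduced modulo n. Then s+j is a score sequence if and only if there exist score sequences u and v with |v| = j such that s = u ⊕ v; and in that case s + j = v ⊕ u. -/

import Mathlib

/-- A score sequence: nondecreasing, entries in `[0, n-1]`, prefix sums at least
`binom k 2`, and total sum `binom n 2`. -/
def IsScoreSeq (s : List ℕ) : Prop :=
  s.Pairwise (· ≤ ·) ∧ (∀ x ∈ s, x < s.length) ∧
    (∀ k, 0 < k → k < s.length → k.choose 2 ≤ (s.take k).sum) ∧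
    s.sum = s.length.choose 2

/-- A strong score sequence: nonempty and all proper prefix-sum inequalities strict. -/
def IsStrongScoreSeq (s : List ℕ) : Prop :=
  IsScoreSeq s ∧ s ≠ [] ∧ ∀ k, 0 < k → k < s.length → k.choose 2 < (s.take k).sum

/-- Direct sum of score sequences: concatenate `u` with `v` shifted up by `u.length`. -/
def dsum (u v : List ℕ) : List ℕ := u ++ v.map (· + u.length)

/-- Iterated direct sum of a list of score sequences. -/
def dsumAll (ts : List (List ℕ)) : List ℕ := ts.foldl dsum []

/-- `s + j`: entries shifted by `j`, reduced modulo the length, sorted nondecreasingly. -/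
def shift (s : List ℕ) (j : ℕ) : List ℕ :=
  Multiset.sort ((s.map fun x => (x + j) % s.length : List ℕ) : Multiset ℕ) (· ≤ ·)

/-!
Reducing modulo `n` subtracts `n` exactly from the entries `x ≥ n - j`, so the entries of `s + j`
sum to `∑ s + j n - n · #{x ≥ n - j}`. Both `s` and `s + j` sum to `binom n 2`, hence exactly `j`
entries of `s` are `≥ n - j`; as `s` is sorted these are its last `j` entries, which splits
`s = u ⊕ v` with `|u| = n - j`, `|v| = j`, and then `s + j = v ⊕ u`. The prefix inequalities of `s`
and of `s + j` at `|u|` and `|v|` give `∑ u ≥ binom |u| 2` and `∑ v ≥ binom |v| 2`; since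
`binom n 2 = binom |u| 2 + binom |v| 2 + |u| |v|`, both are equalities, so `u` and `v` are score
sequences.
-/

theorem Nat.add_choose_two (a b : ℕ) : (a + b).choose 2 = a.choose 2 + b.choose 2 + a * b := by
  simp [Nat.add_choose_eq, Finset.Nat.antidiagonal_succ]
  ring

theorem List.sum_map_add_const (l : List ℕ) (c : ℕ) :
    (l.map (· + c)).sum = l.sum + l.length * c := by
  simp [List.sum_map_add]

theorem Multiset.sort_coe_of_perm {α : Type*} [LinearOrder α] {l m : List α} (h : l.Perm m)
    (hm : m.Pairwise (· ≤ ·)) : Multiset.sort (l : Multiset α) (· ≤ ·) = m := by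
  rw [Multiset.coe_eq_coe.2 h, Multiset.coe_sort, List.mergeSort_eq_self _ hm]

theorem List.Pairwise.take_lt_drop_ge_of_countP_eq {α : Type*} [LinearOrder α] {s : List α}
    (hs : s.Pairwise (· ≤ ·)) {a : α} {k : ℕ} (hc : s.countP (a ≤ ·) = s.length - k) :
    (∀ x ∈ s.take k, x < a) ∧ ∀ y ∈ s.drop k, a ≤ y := by
  have hsplit : (s.take k).countP (a ≤ ·) + (s.drop k).countP (a ≤ ·) = (s.drop k).length := by
    rw [← List.countP_append, List.take_append_drop, hc, List.length_drop]
  have hcross : ∀ x ∈ s.take k, ∀ y ∈ s.drop k, x ≤ y := by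
    have : (s.take k ++ s.drop k).Pairwise (· ≤ ·) := by rwa [List.take_append_drop]
    exact (List.pairwise_append.1 this).2.2
  have htake : ∀ x ∈ s.take k, x < a := by
    intro x hx
    by_contra! hax
    have hdrop : (s.drop k).countP (a ≤ ·) = (s.drop k).length :=
      List.countP_eq_length.2 fun y hy => by simpa using hax.trans (hcross x hx y hy)
    have : 0 < (s.take k).countP (a ≤ ·) := List.countP_pos_iff.2 ⟨x, hx, by simpa using hax⟩
    omega
  have htake0 : (s.take k).countP (a ≤ ·) = 0 :=
    List.countP_eq_zero.2 fun x hx => by simpa using htake x hx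
  have hdrop : (s.drop k).countP (a ≤ ·) = (s.drop k).length := by omega
  exact ⟨htake, fun y hy => by simpa using List.countP_eq_length.1 hdrop y hy⟩

theorem sum_map_add_mod_add_mul_countP {n j : ℕ} (hj : j ≤ n) {l : List ℕ}
    (hl : ∀ x ∈ l, x < n) :
    (l.map fun x => (x + j) % n).sum + n * l.countP (n - j ≤ ·) = l.sum + l.length * j := by
  induction l with
  | nil => simp
  | cons a l ih =>
    have ha := hl a List.mem_cons_self
    have ih := ih fun x hx => hl x (List.mem_cons_of_mem a hx)
    simp only [List.map_cons, List.sum_cons, List.countP_cons, List.length_cons, mul_add,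
      add_mul]
    by_cases hwrap : n - j ≤ a
    · have : (a + j) % n = a + j - n := by
        rw [Nat.mod_eq_sub_mod (by omega), Nat.mod_eq_of_lt (by omega)]
      simp only [hwrap, decide_true, if_true, this]
      omega
    · have : (a + j) % n = a + j := Nat.mod_eq_of_lt (by omega)
      simp only [hwrap, decide_false, Bool.false_eq_true, if_false, this]
      omega

section DirectSum

variable {u v : List ℕ}

theorem length_dsum : (dsum u v).length = u.length + v.length := by
  simp [dsum]

theorem sum_dsum : (dsum u v).sum = u.sum + v.sum + u.length * v.length := by
  simp only [dsum, List.sum_append, List.sum_map_add_const]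
  ring

theorem take_dsum_of_le {m : ℕ} (hm : m ≤ u.length) : (dsum u v).take m = u.take m :=
  List.take_append_of_le_length hm

theorem take_dsum_length_add (r : ℕ) : (dsum u v).take (u.length + r) = dsum u (v.take r) := by
  simp [dsum, List.take_append, List.map_take]

theorem pairwise_dsum (hu : u.Pairwise (· ≤ ·)) (hu_lt : ∀ x ∈ u, x < u.length)
    (hv : v.Pairwise (· ≤ ·)) : (dsum u v).Pairwise (· ≤ ·) := by
  refine List.pairwise_append.2 ⟨hu, hv.map _ fun a b h => by omega, ?_⟩
  intro x hx _ hy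
  obtain ⟨y, -, rfl⟩ := List.mem_map.1 hy
  have := hu_lt x hx
  omega

theorem shift_dsum (hu : u.Pairwise (· ≤ ·)) (hu_lt : ∀ x ∈ u, x < u.length)
    (hv : v.Pairwise (· ≤ ·)) (hv_lt : ∀ x ∈ v, x < v.length) :
    shift (dsum u v) v.length = dsum v u := by
  rw [shift, length_dsum]
  refine Multiset.sort_coe_of_perm ?_ (pairwise_dsum hv hv_lt hu)
  have hmap : (dsum u v).map (fun x => (x + v.length) % (u.length + v.length))
      = u.map (· + v.length) ++ v := by
    rw [dsum, List.map_append, List.map_map]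
    congr 1
    · refine List.map_congr_left fun x hx => Nat.mod_eq_of_lt ?_
      have := hu_lt x hx
      omega
    · refine (List.map_congr_left fun x hx => ?_).trans (List.map_id v)
      have := hv_lt x hx
      simp only [Function.comp_apply, id_eq]
      rw [add_assoc, Nat.add_mod_right, Nat.mod_eq_of_lt (by omega)]
  rw [hmap]
  exact List.perm_append_comm

end DirectSum

namespace IsScoreSeq

variable {s u v : List ℕ}

theorem choose_two_le_sum_take (hs : IsScoreSeq s) {m : ℕ} (hm : m ≤ s.length) :
    m.choose 2 ≤ (s.take m).sum := by
  rcases Nat.eq_zero_or_pos m with rfl | hm0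
  · simp
  rcases hm.eq_or_lt with rfl | hlt
  · rw [List.take_length, hs.2.2.2]
  · exact hs.2.2.1 m hm0 hlt

theorem of_sum_le (hsort : s.Pairwise (· ≤ ·)) (hlt : ∀ x ∈ s, x < s.length)
    (hpre : ∀ m ≤ s.length, m.choose 2 ≤ (s.take m).sum) (hsum : s.sum ≤ s.length.choose 2) :
    IsScoreSeq s := by
  refine ⟨hsort, hlt, fun m _ hm => hpre m hm.le, hsum.antisymm ?_⟩
  simpa using hpre s.length le_rfl

theorem left_of_dsum (huv : IsScoreSeq (dsum u v)) (hvu : IsScoreSeq (dsum v u))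
    (hu_lt : ∀ x ∈ u, x < u.length) : IsScoreSeq u := by
  have hpre : ∀ m ≤ u.length, m.choose 2 ≤ (u.take m).sum := fun m hm => by
    simpa only [take_dsum_of_le hm] using
      huv.choose_two_le_sum_take (m := m) (by rw [length_dsum]; omega)
  have hv : v.length.choose 2 ≤ v.sum := by
    simpa only [take_dsum_of_le le_rfl, List.take_length] using
      hvu.choose_two_le_sum_take (m := v.length) (by rw [length_dsum]; omega)
  refine of_sum_le (huv.1.sublist (List.sublist_append_left _ _)) hu_lt hpre ?_
  have := huv.2.2.2
  rw [sum_dsum, length_dsum, Nat.add_choose_two] at this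
  omega

theorem countP_le_eq_of_shift {j : ℕ} (hs : IsScoreSeq s) (hsh : IsScoreSeq (shift s j))
    (hj : j ≤ s.length) : s.countP (s.length - j ≤ ·) = j := by
  rcases Nat.eq_zero_or_pos s.length with hn | hn
  · rw [List.length_eq_zero_iff.1 hn]
    simp only [hn, nonpos_iff_eq_zero] at hj
    simp [hj]
  have hperm : (shift s j).Perm (s.map fun x => (x + j) % s.length) :=
    Multiset.coe_eq_coe.1 (Multiset.sort_eq _ _)
  have hsum := sum_map_add_mod_add_mul_countP hj hs.2.1
  rw [← hperm.sum_eq, hsh.2.2.2, shift, Multiset.length_sort, Multiset.coe_card,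
    List.length_map, hs.2.2.2] at hsum
  have := Nat.mul_comm j s.length
  exact Nat.eq_of_mul_eq_mul_left hn (by omega)

theorem exists_dsum_of_shift {j : ℕ} (hs : IsScoreSeq s) (hsh : IsScoreSeq (shift s j))
    (hj : j ≤ s.length) :
    ∃ u v, IsScoreSeq u ∧ IsScoreSeq v ∧ v.length = j ∧ s = dsum u v := by
  set k := s.length - j
  obtain ⟨htake, hdrop⟩ := hs.1.take_lt_drop_ge_of_countP_eq (a := k) (k := k)
    (by rw [hs.countP_le_eq_of_shift hsh hj]; omega)
  set u := s.take k
  set v := (s.drop k).map (· - k)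
  have hul : u.length = k := List.length_take_of_le (by omega)
  have hvl : v.length = j := by simp only [v, List.length_map, List.length_drop]; omega
  have hsuv : s = dsum u v := by
    rw [dsum, hul, List.map_map]
    refine (s.take_append_drop k).symm.trans (congrArg (u ++ ·) ?_)
    refine ((List.map_congr_left fun y hy => ?_).trans (List.map_id _)).symm
    simp only [Function.comp_apply, id_eq, Nat.sub_add_cancel (hdrop y hy)]
  have hu_lt : ∀ x ∈ u, x < u.length := hul ▸ htake
  have hv_lt : ∀ x ∈ v, x < v.length := by
    intro x hx
    obtain ⟨y, hy, rfl⟩ := List.mem_map.1 hx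
    have := hs.2.1 y (List.mem_of_mem_drop hy)
    have := hdrop y hy
    rw [hvl]
    omega
  have hvu : shift s j = dsum v u := by
    rw [hsuv, ← hvl]
    exact shift_dsum (hs.1.sublist (List.take_sublist _ _)) hu_lt
      ((hs.1.sublist (List.drop_sublist _ _)).map _ fun a b h => Nat.sub_le_sub_right h k) hv_lt
  rw [hsuv] at hs
  rw [hvu] at hsh
  exact ⟨u, v, hs.left_of_dsum hsh hu_lt, hsh.left_of_dsum hs hv_lt, hvl, hsuv⟩

end IsScoreSeq

theorem isScoreSeq_dsum {u v : List ℕ} (hu : IsScoreSeq u) (hv : IsScoreSeq v) :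
    IsScoreSeq (dsum u v) := by
  refine .of_sum_le (pairwise_dsum hu.1 hu.2.1 hv.1) ?_ ?_ ?_
  · intro x hx
    rw [length_dsum]
    rcases List.mem_append.1 hx with hx | hx
    · have := hu.2.1 x hx
      omega
    · obtain ⟨y, hy, rfl⟩ := List.mem_map.1 hx
      have := hv.2.1 y hy
      omega
  · intro m hm
    rw [length_dsum] at hm
    rcases le_or_gt m u.length with hmu | hmu
    · rw [take_dsum_of_le hmu]
      exact hu.choose_two_le_sum_take hmu
    · obtain ⟨r, rfl⟩ : ∃ r, m = u.length + r := ⟨m - u.length, by omega⟩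
      have hr : (v.take r).length = r := List.length_take_of_le (by omega)
      have := hu.choose_two_le_sum_take le_rfl
      have := hv.choose_two_le_sum_take (m := r) (by omega)
      rw [take_dsum_length_add, sum_dsum, hr, Nat.add_choose_two]
      simp only [List.take_length] at *
      omega
  · rw [sum_dsum, length_dsum, hu.2.2.2, hv.2.2.2, Nat.add_choose_two]

theorem shift_scoreSeq_iff_general (s : List ℕ) (hs : IsScoreSeq s)
    (j : ℕ) (hj2 : j ≤ s.length - 1) :
    (IsScoreSeq (shift s j) ↔
      ∃ u v, IsScoreSeq u ∧ IsScoreSeq v ∧ v.length = j ∧ s = dsum u v) ∧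
    (∀ u v, IsScoreSeq u → IsScoreSeq v → v.length = j → s = dsum u v →
      shift s j = dsum v u) := by
  have hshift : ∀ u v, IsScoreSeq u → IsScoreSeq v → v.length = j → s = dsum u v →
      shift s j = dsum v u := by
    rintro u v hu hv rfl rfl
    exact shift_dsum hu.1 hu.2.1 hv.1 hv.2.1
  refine ⟨⟨fun hsh => hs.exists_dsum_of_shift hsh (by omega), ?_⟩, hshift⟩
  rintro ⟨u, v, hu, hv, hvl, hsuv⟩
  rw [hshift u v hu hv hvl hsuv]
  exact isScoreSeq_dsum hv hu

/-- `s+j` is a score sequence iff `s = u ⊕ v` with `v` of length `j`;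
in that case `s+j = v ⊕ u`. -/
theorem shift_scoreSeq_iff (s : List ℕ) (hs : IsScoreSeq s) (hne : s ≠ [])
    (j : ℕ) (hj1 : 1 ≤ j) (hj2 : j ≤ s.length - 1) :
    (IsScoreSeq (shift s j) ↔
      ∃ u v, IsScoreSeq u ∧ IsScoreSeq v ∧ v.length = j ∧ s = dsum u v) ∧
    (∀ u v, IsScoreSeq u → IsScoreSeq v → v.length = j → s = dsum u v →
      shift s j = dsum v u) :=
  shift_scoreSeq_iff_general s hs j hj2
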